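/- Under the Setup: if v_i ∈ e_1 ∩ U for some 1 ≤ i ≤ t−1, then N_H(e_i ∖ U) ⊆ F ∖ {e_t}; and if v_{j−1} ∈ e_t ∩ U for some 2 ≤ j ≤ t−1, then N_H(e_j ∖ U) ⊆ F ∖ {e_1}. -/

import Mathlib

/-!
If `v i ∈ e 1` and `w ∈ e i` lies off the path, then `w, v (i-1), …, v 1, v i, …, v (t-1)` is a
Berge path with the same hyperedges `e 1, …, e (t-1)`, still ending in `e t`. If `w ∈ e t` this
closes up to a Berge cycle of length `t`. Otherwise a further copy of a hyperedge `s ∋ w` can be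
prepended, and `e t` appended, each through a fresh vertex (there is room since `r ≥ k > t`),
giving a Berge path of length `t + 1`. The second claim is the first one for the reversed path.
-/

namespace BergeM

def MIsBergePath {n : ℕ} (E : Multiset (Finset (Fin n))) (k : ℕ)
    (v : Fin (k + 1) → Fin n) (f : Fin k → Finset (Fin n)) : Prop :=
  Function.Injective v ∧ (↑(List.ofFn f) : Multiset (Finset (Fin n))) ≤ E ∧
    ∀ i : Fin k, v i.castSucc ∈ f i ∧ v i.succ ∈ f i

def MHasBergePath {n : ℕ} (E : Multiset (Finset (Fin n))) (k : ℕ) : Prop :=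
  ∃ v f, MIsBergePath E k v f

def MBPFree {n : ℕ} (E : Multiset (Finset (Fin n))) (k : ℕ) : Prop :=
  ¬ MHasBergePath E k

def MConnected {n : ℕ} (E : Multiset (Finset (Fin n))) : Prop :=
  ∀ x y : Fin n, ∃ (k : ℕ) (v : Fin (k + 1) → Fin n) (f : Fin k → Finset (Fin n)),
    MIsBergePath E k v f ∧ (∃ i, v i = x) ∧ (∃ i, v i = y)

def MUniform {n : ℕ} (E : Multiset (Finset (Fin n))) (r : ℕ) : Prop :=
  ∀ e ∈ E, e.card = r

def MIsBergeCycle {n : ℕ} (E : Multiset (Finset (Fin n))) (k : ℕ)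
    (v : Fin k → Fin n) (f : Fin k → Finset (Fin n)) : Prop :=
  Function.Injective v ∧ (↑(List.ofFn f) : Multiset (Finset (Fin n))) ≤ E ∧
    ∀ i : Fin k, v i ∈ f i ∧ v ⟨(i.val + 1) % k, Nat.mod_lt _ i.pos⟩ ∈ f i

def MHasBergeCycle {n : ℕ} (E : Multiset (Finset (Fin n))) (k : ℕ) : Prop :=
  ∃ v f, MIsBergeCycle E k v f

def edgeNbhd {n : ℕ} (E : Multiset (Finset (Fin n))) (S : Finset (Fin n)) :
    Multiset (Finset (Fin n)) :=
  E.filter fun e => (e ∩ S).Nonempty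

section Reindexing

variable {α : Type*}

lemma ofFn_comp_val (k : ℕ) (g : ℕ → α) :
    List.ofFn (fun i : Fin k => g i) = (List.range k).map g := by
  apply List.ext_getElem <;> simp

lemma map_range_succ_update [DecidableEq α] (k : ℕ) (g : ℕ → α) (a : α) :
    (List.range (k + 1)).map (Function.update g k a) = (List.range k).map g ++ [a] := by
  rw [List.range_succ, List.map_append, List.map_singleton, Function.update_self]
  congr 1
  refine List.map_congr_left fun m hm => Function.update_of_ne ?_ _ _
  exact (List.mem_range.mp hm).ne

lemma coe_map_range_eq_of_injOn {c : ℕ} (f g : ℕ → α) {τ : ℕ → ℕ}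
    (hmaps : Set.MapsTo τ (Set.Iio c) (Set.Iio c)) (hinj : Set.InjOn τ (Set.Iio c))
    (hfg : ∀ m < c, f m = g (τ m)) :
    (↑((List.range c).map f) : Multiset α) = ↑((List.range c).map g) := by
  have hperm : ((List.range c).map τ).Perm (List.range c) := by
    refine (List.subperm_of_subset ?_ ?_).perm_of_length_le (by simp)
    · exact List.nodup_range.map_on fun x hx y hy => hinj (List.mem_range.mp hx)
        (List.mem_range.mp hy)
    · intro x hx
      obtain ⟨m, hm, rfl⟩ := List.mem_map.mp hx
      exact List.mem_range.mpr (hmaps (List.mem_range.mp hm))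
  have hf : (List.range c).map f = ((List.range c).map τ).map g := by
    rw [List.map_map]
    exact List.map_congr_left fun m hm => hfg m (List.mem_range.mp hm)
  rw [hf, Multiset.coe_eq_coe]
  exact hperm.map g

lemma cons_add_singleton_le [DecidableEq α] {M N : Multiset α} {a b : α} (hab : a ≠ b)
    (hM : M + {b} ≤ N) (hcount : M.count a < N.count a) : a ::ₘ M + {b} ≤ N := by
  rw [Multiset.le_iff_count] at hM ⊢
  intro x
  have := hM x
  rw [Multiset.count_add, Multiset.count_singleton] at this
  rw [Multiset.count_add, Multiset.count_cons, Multiset.count_singleton]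
  split_ifs at this ⊢ <;> subst_vars <;> first | omega | contradiction

lemma image_Icc_reflect [DecidableEq α] (t : ℕ) (v : ℕ → α) :
    (Finset.Icc 1 (t - 1)).image (fun i => v (t - i)) = (Finset.Icc 1 (t - 1)).image v := by
  ext x
  simp only [Finset.mem_image, Finset.mem_Icc]
  constructor
  · rintro ⟨m, hm, rfl⟩
    exact ⟨t - m, ⟨by omega, by omega⟩, rfl⟩
  · rintro ⟨m, hm, rfl⟩
    exact ⟨t - m, ⟨by omega, by omega⟩, by rw [show t - (t - m) = m by omega]⟩

end Reindexing

section Chain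

variable {α : Type*}

/-- The shape of a Berge path `V 0, G 0, V 1, …, G (k - 1), V k` indexed by `ℕ`, without the
requirement that the edges `G 0, …, G (k - 1)` are available in the hypergraph. -/
def IsBergeChain (k : ℕ) (V : ℕ → α) (G : ℕ → Finset α) : Prop :=
  Set.InjOn V (Set.Iic k) ∧ ∀ m < k, V m ∈ G m ∧ V (m + 1) ∈ G m

def natCons (a : α) (f : ℕ → α) : ℕ → α
  | 0 => a
  | m + 1 => f m

@[simp]
lemma natCons_succ (a : α) (f : ℕ → α) (m : ℕ) : natCons a f (m + 1) = f m :=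
  rfl

lemma map_range_succ_natCons (k : ℕ) (a : α) (f : ℕ → α) :
    (List.range (k + 1)).map (natCons a f) = a :: (List.range k).map f := by
  rw [List.range_succ_eq_map, List.map_cons, List.map_map]
  rfl

namespace IsBergeChain

variable {k : ℕ} {V : ℕ → α} {G : ℕ → Finset α}

lemma natCons (h : IsBergeChain k V G) {u : α} {s : Finset α} (hu : u ∈ s) (hV : V 0 ∈ s)
    (hnew : ∀ m ≤ k, V m ≠ u) :
    IsBergeChain (k + 1) (natCons u V) (natCons s G) := by
  refine ⟨?_, ?_⟩
  · rintro (_ | a) ha (_ | b) hb hab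
    · rfl
    · exact absurd hab.symm (hnew b (by simpa using hb))
    · exact absurd hab (hnew a (by simpa using ha))
    · simp only [Set.mem_Iic, add_le_add_iff_right] at ha hb
      exact congrArg (· + 1) (h.1 ha hb hab)
  · rintro (_ | m) hm
    · exact ⟨hu, hV⟩
    · exact h.2 m (by omega)

lemma snoc [DecidableEq α] (h : IsBergeChain k V G) {u : α} {f : Finset α} (hV : V k ∈ f)
    (hu : u ∈ f) (hnew : ∀ m ≤ k, V m ≠ u) :
    IsBergeChain (k + 1) (Function.update V (k + 1) u) (Function.update G k f) := by
  refine ⟨?_, fun m hm => ?_⟩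
  · intro a ha b hb hab
    simp only [Set.mem_Iic] at ha hb
    rcases ha.lt_or_eq with ha | rfl <;> rcases hb.lt_or_eq with hb | rfl
    · rw [Function.update_of_ne ha.ne, Function.update_of_ne hb.ne] at hab
      exact h.1 (Nat.le_of_lt_succ ha) (Nat.le_of_lt_succ hb) hab
    · rw [Function.update_of_ne ha.ne, Function.update_self] at hab
      exact absurd hab (hnew a (Nat.le_of_lt_succ ha))
    · rw [Function.update_of_ne hb.ne, Function.update_self] at hab
      exact absurd hab.symm (hnew b (Nat.le_of_lt_succ hb))
    · rfl
  · rcases (Nat.le_of_lt_succ hm).lt_or_eq with hm | rfl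
    · rw [Function.update_of_ne hm.ne, Function.update_of_ne (by omega),
        Function.update_of_ne (by omega)]
      exact h.2 m hm
    · simp only [Function.update_self, Function.update_of_ne (Nat.succ_ne_self m).symm]
      exact ⟨hV, hu⟩

variable {n : ℕ} {E : Multiset (Finset (Fin n))} {V : ℕ → Fin n} {G : ℕ → Finset (Fin n)}

lemma mHasBergePath (h : IsBergeChain k V G)
    (hE : (↑((List.range k).map G) : Multiset (Finset (Fin n))) ≤ E) : MHasBergePath E k := by
  refine ⟨fun i => V i, fun i => G i, fun a b hab => ?_, by rwa [ofFn_comp_val], fun i => ?_⟩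
  · exact Fin.ext (h.1 (Nat.le_of_lt_succ a.2) (Nat.le_of_lt_succ b.2) hab)
  · simpa using h.2 i i.2

lemma mHasBergeCycle (h : IsBergeChain k V G) {f : Finset (Fin n)} (h0 : V 0 ∈ f)
    (hk : V k ∈ f) (hE : (↑((List.range k).map G) : Multiset (Finset (Fin n))) + {f} ≤ E) :
    MHasBergeCycle E (k + 1) := by
  refine ⟨fun i => V i, fun i => Function.update G k f i, fun a b hab => ?_, ?_, fun i => ?_⟩
  · exact Fin.ext (h.1 (Nat.le_of_lt_succ a.2) (Nat.le_of_lt_succ b.2) hab)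
  · rwa [ofFn_comp_val, map_range_succ_update, ← Multiset.coe_add, Multiset.coe_singleton]
  · dsimp only
    rcases (Nat.le_of_lt_succ i.2).lt_or_eq with hi | hi
    · rw [Function.update_of_ne hi.ne, Nat.mod_eq_of_lt (by omega)]
      exact h.2 i hi
    · simp only [hi, Function.update_self, Nat.mod_self]
      exact ⟨hk, h0⟩

end IsBergeChain

end Chain

section Paths

variable {n : ℕ} {E : Multiset (Finset (Fin n))}

lemma MHasBergePath.mono {a b : ℕ} (hab : a ≤ b) (h : MHasBergePath E b) :
    MHasBergePath E a := by
  obtain ⟨v, f, hv, hf, hadj⟩ := h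
  refine ⟨v ∘ Fin.castLE (by omega), f ∘ Fin.castLE hab, hv.comp (Fin.castLE_injective _),
    le_trans ?_ hf, fun i => hadj (Fin.castLE hab i)⟩
  have htake : List.ofFn (f ∘ Fin.castLE hab) = (List.ofFn f).take a := by
    apply List.ext_getElem <;> simp [hab]
  rw [htake, Multiset.coe_le]
  exact (List.take_sublist _ _).subperm

lemma MBPFree.lt_of_mHasBergePath {k t : ℕ} (hf : MBPFree E k) (ht : MHasBergePath E t) :
    t < k :=
  Nat.lt_of_not_le fun hkt => hf (ht.mono hkt)

end Paths

/-- Vertex positions of the rotated path `w, v (i-1), …, v 1, v i, v (i+1), …`; position `0` holds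
the new vertex `w`. -/
def rotVertex (i m : ℕ) : ℕ := if 0 < m ∧ m < i then i - m else m

/-- Edge positions (shifted down by one) of the rotated path `e i, …, e 2, e 1, e (i+1), …`. -/
def rotEdge (i m : ℕ) : ℕ := if m + 1 < i then i - m - 1 else if m + 1 = i then 0 else m

lemma rotVertex_injective (i : ℕ) : Function.Injective (rotVertex i) := by
  intro a b h
  simp only [rotVertex] at h
  split_ifs at h <;> omega

lemma rotEdge_injective (i : ℕ) : Function.Injective (rotEdge i) := by
  intro a b h
  simp only [rotEdge] at h
  split_ifs at h <;> omega

@[simp]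
lemma rotVertex_zero (i : ℕ) : rotVertex i 0 = 0 := by
  simp [rotVertex]

lemma rotEdge_zero_add_one {i : ℕ} (hi : 1 ≤ i) : rotEdge i 0 + 1 = i := by
  simp only [rotEdge]
  split_ifs <;> omega

lemma rotVertex_mem_Icc {i m c : ℕ} (hi : i ≤ c) (hm0 : 0 < m) (hm : m ≤ c) :
    rotVertex i m ∈ Set.Icc 1 c := by
  simp only [rotVertex, Set.mem_Icc]
  split_ifs <;> omega

lemma rotEdge_lt {i m c : ℕ} (hi : i ≤ c) (hm : m < c) : rotEdge i m < c := by
  simp only [rotEdge]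
  split_ifs <;> omega

section RotPath

variable {α : Type*} {v : ℕ → α} {w : α} {i c : ℕ}

def rotPath (v : ℕ → α) (w : α) (i : ℕ) : ℕ → α := Function.update v 0 w ∘ rotVertex i

@[simp]
lemma rotPath_zero : rotPath v w i 0 = w := by
  simp [rotPath]

lemma rotPath_of_pos {m : ℕ} (hm : 0 < m) : rotPath v w i m = v (rotVertex i m) :=
  Function.update_of_ne (rotVertex_zero i ▸ (rotVertex_injective i).ne hm.ne') ..

lemma rotPath_of_le {m : ℕ} (hi : 1 ≤ i) (him : i ≤ m) : rotPath v w i m = v m := by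
  rw [rotPath_of_pos (by omega), rotVertex, if_neg (by omega)]

lemma rotPath_mem_insert [DecidableEq α] (hi : i ≤ c) {m : ℕ} (hm : m ≤ c) :
    rotPath v w i m ∈ insert w ((Finset.Icc 1 c).image v) := by
  rcases Nat.eq_zero_or_pos m with rfl | hm0
  · simp
  · rw [rotPath_of_pos hm0]
    exact Finset.mem_insert_of_mem
      (Finset.mem_image_of_mem v (by simpa using rotVertex_mem_Icc hi hm0 hm))

lemma rotPath_injOn [DecidableEq α] (hv : Set.InjOn v (Set.Icc 1 c))
    (hw : w ∉ (Finset.Icc 1 c).image v) (hi : i ≤ c) : Set.InjOn (rotPath v w i) (Set.Iic c) := by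
  intro a ha b hb hab
  simp only [Set.mem_Iic] at ha hb
  have hmem : ∀ m, 0 < m → m ≤ c → v (rotVertex i m) ∈ (Finset.Icc 1 c).image v :=
    fun m hm0 hm => Finset.mem_image_of_mem v (by simpa using rotVertex_mem_Icc hi hm0 hm)
  rcases Nat.eq_zero_or_pos a with rfl | ha0 <;> rcases Nat.eq_zero_or_pos b with rfl | hb0
  · rfl
  · rw [rotPath_zero, rotPath_of_pos hb0] at hab
    exact absurd (hab ▸ hmem b hb0 hb) hw
  · rw [rotPath_zero, rotPath_of_pos ha0] at hab
    exact absurd (hab ▸ hmem a ha0 ha) hw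
  · rw [rotPath_of_pos ha0, rotPath_of_pos hb0] at hab
    exact rotVertex_injective i
      (hv (rotVertex_mem_Icc hi ha0 ha) (rotVertex_mem_Icc hi hb0 hb) hab)

end RotPath

lemma coe_map_rotEdge {α : Type*} (g : ℕ → α) {i c : ℕ} (hi : i ≤ c) :
    (↑((List.range c).map fun m => g (rotEdge i m)) : Multiset α) = ↑((List.range c).map g) :=
  coe_map_range_eq_of_injOn _ _ (fun _ hm => rotEdge_lt hi hm)
    (fun _ _ _ _ hab => rotEdge_injective i hab) (fun _ _ => rfl)

/-- The defining hyperedges `e 1, …, e t` and internal defining vertices `v 1, …, v (t - 1)` of a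
Berge path of length `t` in `E`; its two end vertices are not recorded. -/
structure IsPathFrame {n : ℕ} (E : Multiset (Finset (Fin n))) (t : ℕ) (e : ℕ → Finset (Fin n))
    (v : ℕ → Fin n) : Prop where
  edges_le : (↑((List.range t).map fun i => e (i + 1)) : Multiset (Finset (Fin n))) ≤ E
  injOn : Set.InjOn v (Set.Icc 1 (t - 1))
  first_mem : v 1 ∈ e 1
  last_mem : v (t - 1) ∈ e t
  mem : ∀ i : ℕ, 2 ≤ i → i ≤ t - 1 → v (i - 1) ∈ e i ∧ v i ∈ e i

namespace IsPathFrame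

variable {n r t : ℕ} {E : Multiset (Finset (Fin n))} {e : ℕ → Finset (Fin n)} {v : ℕ → Fin n}

lemma reverse (hP : IsPathFrame E t e v) (ht : 1 ≤ t) :
    IsPathFrame E t (fun i => e (t + 1 - i)) (fun i => v (t - i)) where
  edges_le := by
    rw [coe_map_range_eq_of_injOn _ (fun i => e (i + 1)) (τ := fun i => t - 1 - i)
      (fun i hi => by simp only [Set.mem_Iio] at hi ⊢; omega)
      (fun i hi j hj hij => by simp only [Set.mem_Iio] at hi hj hij; omega)
      (fun i hi => by congr 1; omega)]
    exact hP.edges_le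
  injOn i hi j hj hij := by
    simp only [Set.mem_Icc] at hi hj
    have := hP.injOn (⟨by omega, by omega⟩ : t - i ∈ Set.Icc 1 (t - 1)) ⟨by omega, by omega⟩ hij
    omega
  first_mem := by simpa [Nat.sub_sub_self ht] using hP.last_mem
  last_mem := by simpa [Nat.sub_sub_self ht] using hP.first_mem
  mem i hi hit := by
    have h := hP.mem (t + 1 - i) (by omega) (by omega)
    rw [show t + 1 - i - 1 = t - i by omega] at h
    exact ⟨by rw [show t - (i - 1) = t + 1 - i by omega]; exact h.2, h.1⟩

lemma rotate_mem (hP : IsPathFrame E t e v) {i : ℕ} (hit : i ≤ t - 1) (hvi : v i ∈ e 1)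
    {m : ℕ} (hm0 : 0 < m) (hm : m < t - 1) :
    v (rotVertex i m) ∈ e (rotEdge i m + 1) ∧ v (rotVertex i (m + 1)) ∈ e (rotEdge i m + 1) := by
  rcases lt_trichotomy (m + 1) i with hmi | hmi | hmi
  · obtain ⟨h₁, h₂, h₃⟩ : rotVertex i m = i - m ∧ rotVertex i (m + 1) = i - m - 1 ∧
        rotEdge i m + 1 = i - m := by
      simp only [rotVertex, rotEdge]; split_ifs <;> omega
    rw [h₁, h₂, h₃]
    exact (hP.mem (i - m) (by omega) (by omega)).symm
  · obtain ⟨h₁, h₂, h₃⟩ : rotVertex i m = 1 ∧ rotVertex i (m + 1) = i ∧ rotEdge i m + 1 = 1 := by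
      simp only [rotVertex, rotEdge]; split_ifs <;> omega
    rw [h₁, h₂, h₃]
    exact ⟨hP.first_mem, hvi⟩
  · obtain ⟨h₁, h₂, h₃⟩ : rotVertex i m = m ∧ rotVertex i (m + 1) = m + 1 ∧
        rotEdge i m + 1 = m + 1 := by
      simp only [rotVertex, rotEdge]; split_ifs <;> omega
    rw [h₁, h₂, h₃]
    simpa using hP.mem (m + 1) (by omega) (by omega)

lemma rotate_mem_zero (hP : IsPathFrame E t e v) {i : ℕ} (hi1 : 1 ≤ i) (hit : i ≤ t - 1) :
    v (rotVertex i 1) ∈ e i := by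
  rcases hi1.eq_or_lt with rfl | hi2
  · simpa [rotVertex] using hP.first_mem
  · rw [show rotVertex i 1 = i - 1 by simp only [rotVertex]; split_ifs <;> omega]
    exact (hP.mem i hi2 hit).1

lemma isBergeChain_rotate (hP : IsPathFrame E t e v) {i : ℕ} (hi1 : 1 ≤ i) (hit : i ≤ t - 1)
    (hvi : v i ∈ e 1) {w : Fin n} (hw : w ∈ e i)
    (hwU : w ∉ (Finset.Icc 1 (t - 1)).image v) :
    IsBergeChain (t - 1) (rotPath v w i) (fun m => e (rotEdge i m + 1)) := by
  refine ⟨rotPath_injOn hP.injOn hwU hit, fun m hm => ?_⟩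
  dsimp only
  rw [rotPath_of_pos m.succ_pos]
  rcases Nat.eq_zero_or_pos m with rfl | hm0
  · rw [rotPath_zero, rotEdge_zero_add_one hi1]
    exact ⟨hw, hP.rotate_mem_zero hi1 hit⟩
  · rw [rotPath_of_pos hm0]
    exact hP.rotate_mem hit hvi hm0 hm

lemma init_add_last_le (hP : IsPathFrame E t e v) (ht : 1 ≤ t) :
    (↑((List.range (t - 1)).map fun m => e (m + 1)) : Multiset (Finset (Fin n))) + {e t} ≤ E := by
  have h := hP.edges_le
  conv at h => lhs; rw [← Nat.sub_add_cancel ht]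
  rwa [List.range_succ, List.map_append, List.map_singleton, ← Multiset.coe_add,
    Multiset.coe_singleton, Nat.sub_add_cancel ht] at h

lemma notMem_last (hP : IsPathFrame E t e v) (hcyc : ¬ MHasBergeCycle E t)
    {i : ℕ} (hi1 : 1 ≤ i) (hit : i ≤ t - 1) (hvi : v i ∈ e 1) {w : Fin n} (hw : w ∈ e i)
    (hwU : w ∉ (Finset.Icc 1 (t - 1)).image v) : w ∉ e t := by
  intro hwt
  have hC := hP.isBergeChain_rotate hi1 hit hvi hw hwU
  have hE := hP.init_add_last_le (by omega)
  rw [← coe_map_rotEdge (fun m => e (m + 1)) hit] at hE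
  have hcyc' := hC.mHasBergeCycle (rotPath_zero ▸ hwt)
    ((rotPath_of_le hi1 hit).symm ▸ hP.last_mem) hE
  exact hcyc (by rwa [Nat.sub_add_cancel (by omega)] at hcyc')

lemma count_le_of_mem (hP : IsPathFrame E t e v) (hu : MUniform E r)
    (hmax : ∀ s : ℕ, MHasBergePath E s → s ≤ t) (hcyc : ¬ MHasBergeCycle E t) (htr : t + 1 ≤ r)
    {i : ℕ} (hi1 : 1 ≤ i) (hit : i ≤ t - 1) (hvi : v i ∈ e 1) {w : Fin n} (hw : w ∈ e i)
    (hwU : w ∉ (Finset.Icc 1 (t - 1)).image v) {s : Finset (Fin n)} (hws : w ∈ s) :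
    E.count s ≤ Multiset.count s ↑((List.range (t - 1)).map fun m => e (m + 1)) := by
  set U := (Finset.Icc 1 (t - 1)).image v
  have hE := hP.init_add_last_le (by omega)
  have hwt := hP.notMem_last hcyc hi1 hit hvi hw hwU
  have hUcard : U.card ≤ t - 1 := Finset.card_image_le.trans (by simp)
  by_contra! hlt
  obtain ⟨u, hus, huU⟩ := Finset.exists_mem_notMem_of_card_lt_card (s := insert w U) (t := s) (by
    rw [hu s (Multiset.count_pos.mp (by omega))]
    exact (Finset.card_insert_le _ _).trans_lt (by omega))
  obtain ⟨u', hu't, hu'U⟩ := Finset.exists_mem_notMem_of_card_lt_card (s := insert u U)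
    (t := e t) (by
      rw [hu (e t) (Multiset.mem_of_le hE (by simp))]
      exact (Finset.card_insert_le _ _).trans_lt (by omega))
  have hVU : ∀ m ≤ t - 1, rotPath v w i m ∈ insert w U := fun m hm => rotPath_mem_insert hit hm
  have hnew : ∀ m ≤ t - 1, rotPath v w i m ≠ u := fun m hm h => huU (h ▸ hVU m hm)
  have hnew' : ∀ m ≤ t - 1 + 1, natCons u (rotPath v w i) m ≠ u' := by
    rintro (_ | m) hm h
    · exact hu'U (h ▸ Finset.mem_insert_self _ _)
    · rw [natCons_succ] at h
      rcases Finset.mem_insert.mp (hVU m (by omega)) with hm' | hm'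
      · exact hwt (hm' ▸ h ▸ hu't)
      · exact hu'U (Finset.mem_insert_of_mem (h ▸ hm'))
  have hpath := (((hP.isBergeChain_rotate hi1 hit hvi hw hwU).natCons hus (rotPath_zero ▸ hws)
    hnew).snoc (by rw [natCons_succ, rotPath_of_le hi1 hit]; exact hP.last_mem) hu't
    hnew').mHasBergePath (E := E) (by
      rw [map_range_succ_update, map_range_succ_natCons, ← Multiset.coe_add, Multiset.coe_singleton,
        ← Multiset.cons_coe, coe_map_rotEdge (fun m => e (m + 1)) hit]
      exact cons_add_singleton_le (fun h => hwt (h ▸ hws)) hE hlt)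
  have := hmax _ hpath
  omega

lemma edgeNbhd_le (hP : IsPathFrame E t e v) (hu : MUniform E r)
    (hmax : ∀ s : ℕ, MHasBergePath E s → s ≤ t) (hcyc : ¬ MHasBergeCycle E t) (htr : t + 1 ≤ r)
    {i : ℕ} (hi1 : 1 ≤ i) (hit : i ≤ t - 1) (hvi : v i ∈ e 1) :
    edgeNbhd E (e i \ (Finset.Icc 1 (t - 1)).image v) ≤
      ↑((List.range (t - 1)).map fun m => e (m + 1)) := by
  rw [Multiset.le_iff_count]
  intro s
  rw [edgeNbhd, Multiset.count_filter]
  split_ifs with hs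
  · obtain ⟨w, hw⟩ := hs
    rw [Finset.mem_inter, Finset.mem_sdiff] at hw
    obtain ⟨hws, hw, hwU⟩ := hw
    exact hP.count_le_of_mem hu hmax hcyc htr hi1 hit hvi hw hwU hws
  · exact Nat.zero_le _

lemma edgeNbhd_le_of_mem_last (hP : IsPathFrame E t e v) (hu : MUniform E r)
    (hmax : ∀ s : ℕ, MHasBergePath E s → s ≤ t) (hcyc : ¬ MHasBergeCycle E t) (htr : t + 1 ≤ r)
    {j : ℕ} (hj2 : 2 ≤ j) (hjt : j ≤ t - 1) (hvj : v (j - 1) ∈ e t) :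
    edgeNbhd E (e j \ (Finset.Icc 1 (t - 1)).image v) ≤
      ↑((List.range (t - 1)).map fun m => e (m + 2)) := by
  have h := (hP.reverse (by omega)).edgeNbhd_le hu hmax hcyc htr (i := t + 1 - j) (by omega)
    (by omega) (by rwa [show t - (t + 1 - j) = j - 1 by omega, Nat.add_sub_cancel])
  rwa [image_Icc_reflect, Nat.sub_sub_self (by omega),
    coe_map_range_eq_of_injOn _ (fun m => e (m + 2)) (τ := fun m => t - 2 - m)
    (fun m hm => by simp only [Set.mem_Iio] at hm ⊢; omega)
    (fun a ha b hb hab => by simp only [Set.mem_Iio] at ha hb hab; omega)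
    (fun m hm => by congr 1; omega)] at h

end IsPathFrame

theorem stmt14_general    (n r k t : ℕ) (hrk : k ≤ r)
    (E : Multiset (Finset (Fin n))) (hu : MUniform E r)
    (hf : MBPFree E k)
    (ht : MHasBergePath E t) (hmax : ∀ s : ℕ, MHasBergePath E s → s ≤ t)
    (hcyc : ¬ MHasBergeCycle E t)
    (e : ℕ → Finset (Fin n)) (v : ℕ → Fin n)
    (he : (↑((List.range t).map fun i => e (i + 1)) : Multiset (Finset (Fin n))) ≤ E)
    (hvinj : Set.InjOn v (Set.Icc 1 (t - 1)))
    (hv1 : v 1 ∈ e 1) (hvt : v (t - 1) ∈ e t)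
    (hvmid : ∀ i : ℕ, 2 ≤ i → i ≤ t - 1 → v (i - 1) ∈ e i ∧ v i ∈ e i)
 :
    (∀ i : ℕ, 1 ≤ i → i ≤ t - 1 → v i ∈ e 1 →
        edgeNbhd E (e i \ (Finset.Icc 1 (t - 1)).image v) ≤
          (↑((List.range (t - 1)).map fun i => e (i + 1)) : Multiset (Finset (Fin n)))) ∧
    (∀ j : ℕ, 2 ≤ j → j ≤ t - 1 → v (j - 1) ∈ e t →
        edgeNbhd E (e j \ (Finset.Icc 1 (t - 1)).image v) ≤
          (↑((List.range (t - 1)).map fun i => e (i + 2)) : Multiset (Finset (Fin n)))) := by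
  have htr : t + 1 ≤ r := (hf.lt_of_mHasBergePath ht).trans_le hrk
  have hP : IsPathFrame E t e v := ⟨he, hvinj, hv1, hvt, hvmid⟩
  exact ⟨fun i hi1 hit hvi => hP.edgeNbhd_le hu hmax hcyc htr hi1 hit hvi,
    fun j hj2 hjt hvj => hP.edgeNbhd_le_of_mem_last hu hmax hcyc htr hj2 hjt hvj⟩

theorem stmt14    (n r k t : ℕ) (hk : 3 ≤ k) (hrk : k ≤ r) (hn : r < n)
    (E : Multiset (Finset (Fin n))) (hu : MUniform E r) (hc : MConnected E)
    (hf : MBPFree E k)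
    (ht : MHasBergePath E t) (hmax : ∀ s : ℕ, MHasBergePath E s → s ≤ t)
    (hcyc : ¬ MHasBergeCycle E t)
    (e : ℕ → Finset (Fin n)) (v : ℕ → Fin n)
    (he : (↑((List.range t).map fun i => e (i + 1)) : Multiset (Finset (Fin n))) ≤ E)
    (hvinj : Set.InjOn v (Set.Icc 1 (t - 1)))
    (hv1 : v 1 ∈ e 1) (hvt : v (t - 1) ∈ e t)
    (hvmid : ∀ i : ℕ, 2 ≤ i → i ≤ t - 1 → v (i - 1) ∈ e i ∧ v i ∈ e i)
 :
    (∀ i : ℕ, 1 ≤ i → i ≤ t - 1 → v i ∈ e 1 →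
        edgeNbhd E (e i \ (Finset.Icc 1 (t - 1)).image v) ≤
          (↑((List.range (t - 1)).map fun i => e (i + 1)) : Multiset (Finset (Fin n)))) ∧
    (∀ j : ℕ, 2 ≤ j → j ≤ t - 1 → v (j - 1) ∈ e t →
        edgeNbhd E (e j \ (Finset.Icc 1 (t - 1)).image v) ≤
          (↑((List.range (t - 1)).map fun i => e (i + 2)) : Multiset (Finset (Fin n)))) :=
  stmt14_general n r k t hrk E hu hf ht hmax hcyc e v he hvinj hv1 hvt hvmid

end BergeM
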